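/- Let U ⊆ ℍ be open and let ρ : U → ℝ be a smooth positive function. Then for every point p ∈ U, the harmonic-function-ansatz connection A⁻ with components A_μ := −Im((∂(log ρ)/∂x)·e_μ) is self-dual at p (i.e. its curvature satisfies F₀₁ = F₂₃, F₀₂ = F₃₁ and F₀₃ = F₁₂ at p) if and only if (Δρ)(p) = 0. In particular, A⁻ is a self-dual connection on all of U if and only if ρ is harmonic. -/

import Mathlib

open scoped Quaternion

noncomputable section

/-- The quaternion units (1, i, j, k) as coordinate directions in ℍ ≅ ℝ⁴. -/
def qe : Fin 4 → ℍ[ℝ] := ![1, ⟨0,1,0,0⟩, ⟨0,0,1,0⟩, ⟨0,0,0,1⟩]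

/-- Partial derivative ∂_μ of a quaternion-valued function, in the direction `qe μ`. -/
def qpd (μ : Fin 4) (f : ℍ[ℝ] → ℍ[ℝ]) (x : ℍ[ℝ]) : ℍ[ℝ] := fderiv ℝ f x (qe μ)

/-- Partial derivative ∂_μ of a real-valued function on ℍ. -/
def rpd (μ : Fin 4) (f : ℍ[ℝ] → ℝ) (x : ℍ[ℝ]) : ℝ := fderiv ℝ f x (qe μ)

/-- Flat Laplacian Δ = ∂₀² + ∂₁² + ∂₂² + ∂₃² on ℍ ≅ ℝ⁴. -/
def qlap (f : ℍ[ℝ] → ℝ) (x : ℍ[ℝ]) : ℝ := ∑ μ : Fin 4, rpd μ (rpd μ f) x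

/-- Quaternionic Wirtinger-type derivative ∂f/∂x = (1/2)(∂₀f − i·∂₁f − j·∂₂f − k·∂₃f). -/
def qdx (f : ℍ[ℝ] → ℍ[ℝ]) (x : ℍ[ℝ]) : ℍ[ℝ] :=
  (2:ℝ)⁻¹ • (qpd 0 f x - qe 1 * qpd 1 f x - qe 2 * qpd 2 f x - qe 3 * qpd 3 f x)

/-- log ρ viewed as a quaternion-valued function. -/
def qlog (ρ : ℍ[ℝ] → ℝ) : ℍ[ℝ] → ℍ[ℝ] := fun x => ((Real.log (ρ x) : ℝ) : ℍ[ℝ])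

/-- Components A_μ = −Im((∂(log ρ)/∂x)·e_μ) of the harmonic-function-ansatz connection A⁻. -/
def Aminus (ρ : ℍ[ℝ] → ℝ) (μ : Fin 4) (x : ℍ[ℝ]) : ℍ[ℝ] :=
  - Quaternion.im (qdx (qlog ρ) x * qe μ)

/-- Curvature components F_{μν} = ∂_μ A_ν − ∂_ν A_μ + A_μ A_ν − A_ν A_μ. -/
def curv (A : Fin 4 → ℍ[ℝ] → ℍ[ℝ]) (μ ν : Fin 4) (x : ℍ[ℝ]) : ℍ[ℝ] :=
  qpd μ (A ν) x - qpd ν (A μ) x + A μ x * A ν x - A ν x * A μ x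

/-- Self-duality of the curvature of the connection A at the point p:
F₀₁ = F₂₃, F₀₂ = F₃₁, F₀₃ = F₁₂. -/
def SelfDualAt (A : Fin 4 → ℍ[ℝ] → ℍ[ℝ]) (p : ℍ[ℝ]) : Prop :=
  curv A 0 1 p = curv A 2 3 p ∧ curv A 0 2 p = curv A 3 1 p ∧ curv A 0 3 p = curv A 1 2 p

/-- The coercion ℝ → ℍ as a continuous linear map. -/
def cRH : ℝ →L[ℝ] ℍ[ℝ] := (ContinuousLinearMap.id ℝ ℝ).smulRight (1 : ℍ[ℝ])

lemma cRH_apply (r : ℝ) : cRH r = (r : ℍ[ℝ]) := by ext <;> simp [cRH]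

/-- A quaternion literal, typed as `ℍ[ℝ]`. -/
def qL (a b c d : ℝ) : ℍ[ℝ] := ⟨a, b, c, d⟩

lemma qL_eq (a b c d : ℝ) : (⟨a, b, c, d⟩ : ℍ[ℝ]) = qL a b c d := rfl

lemma qL_re (a b c d : ℝ) : (qL a b c d).re = a := rfl

lemma qL_imI (a b c d : ℝ) : (qL a b c d).imI = b := rfl

lemma qL_imJ (a b c d : ℝ) : (qL a b c d).imJ = c := rfl

lemma qL_imK (a b c d : ℝ) : (qL a b c d).imK = d := rfl

set_option maxHeartbeats 1000000 in
theorem key (U : Set ℍ[ℝ]) (hU : IsOpen U) (ρ : ℍ[ℝ] → ℝ)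
    (hρ : ContDiffOn ℝ (⊤ : ℕ∞) ρ U) (hpos : ∀ x ∈ U, 0 < ρ x) (p : ℍ[ℝ]) (hp : p ∈ U) :
    SelfDualAt (Aminus ρ) p ↔ qlap ρ p = 0 := by
  set g : ℍ[ℝ] → ℝ := fun x => Real.log (ρ x) with hg_def
  have hρC : ∀ x ∈ U, ContDiffAt ℝ (⊤ : ℕ∞) ρ x := fun x hx => hρ.contDiffAt (hU.mem_nhds hx)
  have hgC : ∀ x ∈ U, ContDiffAt ℝ (⊤ : ℕ∞) g x := fun x hx =>
    (Real.contDiffAt_log.mpr (hpos x hx).ne').comp x (hρC x hx)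
  have hgd : ∀ x ∈ U, DifferentiableAt ℝ g x := fun x hx => (hgC x hx).differentiableAt (by simp)
  set u : Fin 4 → ℍ[ℝ] → ℝ := fun σ x => fderiv ℝ g x (qe σ) with hu_def
  have hfun : qlog ρ = fun x => cRH (g x) := funext fun x => by rw [cRH_apply]; rfl
  have hqlog : ∀ x ∈ U, ∀ σ, qpd σ (qlog ρ) x = ((u σ x : ℝ) : ℍ[ℝ]) := by
    intro x hx σ
    have h1 : HasFDerivAt (fun y => cRH (g y)) (cRH.comp (fderiv ℝ g x)) x :=
      cRH.hasFDerivAt.comp x (hgd x hx).hasFDerivAt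
    show fderiv ℝ (qlog ρ) x (qe σ) = _
    rw [hfun, h1.fderiv]
    simp [ContinuousLinearMap.comp_apply, cRH_apply, hu_def]
  have hD : ∀ x ∈ U, qdx (qlog ρ) x =
      (2:ℝ)⁻¹ • (((u 0 x : ℝ) : ℍ[ℝ]) - qe 1 * ((u 1 x : ℝ) : ℍ[ℝ])
        - qe 2 * ((u 2 x : ℝ) : ℍ[ℝ]) - qe 3 * ((u 3 x : ℝ) : ℍ[ℝ])) := by
    intro x hx
    show (2:ℝ)⁻¹ • (qpd 0 (qlog ρ) x - qe 1 * qpd 1 (qlog ρ) x - qe 2 * qpd 2 (qlog ρ) x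
      - qe 3 * qpd 3 (qlog ρ) x) = _
    rw [hqlog x hx 0, hqlog x hx 1, hqlog x hx 2, hqlog x hx 3]
  have hAx : ∀ x ∈ U,
      (Aminus ρ 0 x = ((2:ℝ)⁻¹ * u 1 x) • qe 1 + ((2:ℝ)⁻¹ * u 2 x) • qe 2 + ((2:ℝ)⁻¹ * u 3 x) • qe 3) ∧
      (Aminus ρ 1 x = (-((2:ℝ)⁻¹ * u 0 x)) • qe 1 + ((2:ℝ)⁻¹ * u 3 x) • qe 2 + (-((2:ℝ)⁻¹ * u 2 x)) • qe 3) ∧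
      (Aminus ρ 2 x = (-((2:ℝ)⁻¹ * u 3 x)) • qe 1 + (-((2:ℝ)⁻¹ * u 0 x)) • qe 2 + ((2:ℝ)⁻¹ * u 1 x) • qe 3) ∧
      (Aminus ρ 3 x = ((2:ℝ)⁻¹ * u 2 x) • qe 1 + (-((2:ℝ)⁻¹ * u 1 x)) • qe 2 + (-((2:ℝ)⁻¹ * u 0 x)) • qe 3) := by
    intro x hx
    refine ⟨?_, ?_, ?_, ?_⟩ <;>
    · show - Quaternion.im (qdx (qlog ρ) x * qe _) = _
      rw [hD x hx]
      ext <;> simp [Quaternion.re_mul, Quaternion.imI_mul, Quaternion.imJ_mul, Quaternion.imK_mul] <;> simp [qe]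
  have hG2 : ContDiffAt ℝ 1 (fderiv ℝ g) p := (hgC p hp).fderiv_right (WithTop.coe_le_coe.mpr le_top)
  have hG : HasFDerivAt (fderiv ℝ g) (fderiv ℝ (fderiv ℝ g) p) p :=
    (hG2.differentiableAt one_ne_zero).hasFDerivAt
  set G' : ℍ[ℝ] →L[ℝ] ℍ[ℝ] →L[ℝ] ℝ := fderiv ℝ (fderiv ℝ g) p with hG'_def
  set v : Fin 4 → Fin 4 → ℝ := fun ν σ => G' (qe ν) (qe σ) with hv_def
  have hsym : ∀ ν σ, v ν σ = v σ ν := fun ν σ =>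
    ((hgC p hp).isSymmSndFDerivAt (by rw [minSmoothness_of_isRCLikeNormedField]; exact WithTop.coe_le_coe.mpr le_top)) (qe ν) (qe σ)
  have hu : ∀ σ, HasFDerivAt (u σ) (G'.flip (qe σ)) p := by
    intro σ
    simpa using hG.clm_apply (hasFDerivAt_const (qe σ) p)
  set a : Fin 4 → ℝ := fun σ => u σ p with ha_def
  have hmemU : U ∈ nhds p := hU.mem_nhds hp
  have hdA0 : HasFDerivAt (Aminus ρ 0)
      (((2:ℝ)⁻¹ • G'.flip (qe 1)).smulRight (qe 1) + ((2:ℝ)⁻¹ • G'.flip (qe 2)).smulRight (qe 2)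
        + ((2:ℝ)⁻¹ • G'.flip (qe 3)).smulRight (qe 3)) p := by
    refine HasFDerivAt.congr_of_eventuallyEq ?_
      (Filter.eventually_of_mem hmemU fun x hx => (hAx x hx).1)
    exact ((((hu 1).const_mul _).smul_const (qe 1)).add
      (((hu 2).const_mul _).smul_const (qe 2))).add (((hu 3).const_mul _).smul_const (qe 3))
  have hdA1 : HasFDerivAt (Aminus ρ 1)
      ((-((2:ℝ)⁻¹ • G'.flip (qe 0))).smulRight (qe 1) + ((2:ℝ)⁻¹ • G'.flip (qe 3)).smulRight (qe 2)
        + (-((2:ℝ)⁻¹ • G'.flip (qe 2))).smulRight (qe 3)) p := by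
    refine HasFDerivAt.congr_of_eventuallyEq ?_
      (Filter.eventually_of_mem hmemU fun x hx => (hAx x hx).2.1)
    exact (((((hu 0).const_mul _).neg).smul_const (qe 1)).add
      (((hu 3).const_mul _).smul_const (qe 2))).add ((((hu 2).const_mul _).neg).smul_const (qe 3))
  have hdA2 : HasFDerivAt (Aminus ρ 2)
      ((-((2:ℝ)⁻¹ • G'.flip (qe 3))).smulRight (qe 1) + (-((2:ℝ)⁻¹ • G'.flip (qe 0))).smulRight (qe 2)
        + ((2:ℝ)⁻¹ • G'.flip (qe 1)).smulRight (qe 3)) p := by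
    refine HasFDerivAt.congr_of_eventuallyEq ?_
      (Filter.eventually_of_mem hmemU fun x hx => (hAx x hx).2.2.1)
    exact ((((((hu 3).const_mul _).neg).smul_const (qe 1)).add
      ((((hu 0).const_mul _).neg).smul_const (qe 2))).add (((hu 1).const_mul _).smul_const (qe 3)))
  have hdA3 : HasFDerivAt (Aminus ρ 3)
      (((2:ℝ)⁻¹ • G'.flip (qe 2)).smulRight (qe 1) + (-((2:ℝ)⁻¹ • G'.flip (qe 1))).smulRight (qe 2)
        + (-((2:ℝ)⁻¹ • G'.flip (qe 0))).smulRight (qe 3)) p := by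
    refine HasFDerivAt.congr_of_eventuallyEq ?_
      (Filter.eventually_of_mem hmemU fun x hx => (hAx x hx).2.2.2)
    exact (((((hu 2).const_mul _).smul_const (qe 1)).add
      ((((hu 1).const_mul _).neg).smul_const (qe 2))).add ((((hu 0).const_mul _).neg).smul_const (qe 3)))
  have hq0 : ∀ ν, qpd ν (Aminus ρ 0) p = (⟨0, 2⁻¹ * v ν 1, 2⁻¹ * v ν 2, 2⁻¹ * v ν 3⟩ : ℍ[ℝ]) := by
    intro ν
    show fderiv ℝ (Aminus ρ 0) p (qe ν) = _
    rw [hdA0.fderiv]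
    simp only [ContinuousLinearMap.add_apply, ContinuousLinearMap.smulRight_apply,
      ContinuousLinearMap.smul_apply, ContinuousLinearMap.neg_apply,
      ContinuousLinearMap.flip_apply, smul_eq_mul, hv_def]
    ext <;> simp <;> simp [qe]
  have hq1 : ∀ ν, qpd ν (Aminus ρ 1) p = (⟨0, -(2⁻¹ * v ν 0), 2⁻¹ * v ν 3, -(2⁻¹ * v ν 2)⟩ : ℍ[ℝ]) := by
    intro ν
    show fderiv ℝ (Aminus ρ 1) p (qe ν) = _
    rw [hdA1.fderiv]
    simp only [ContinuousLinearMap.add_apply, ContinuousLinearMap.smulRight_apply,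
      ContinuousLinearMap.smul_apply, ContinuousLinearMap.neg_apply,
      ContinuousLinearMap.flip_apply, smul_eq_mul, hv_def]
    ext <;> simp <;> simp [qe]
  have hq2 : ∀ ν, qpd ν (Aminus ρ 2) p = (⟨0, -(2⁻¹ * v ν 3), -(2⁻¹ * v ν 0), 2⁻¹ * v ν 1⟩ : ℍ[ℝ]) := by
    intro ν
    show fderiv ℝ (Aminus ρ 2) p (qe ν) = _
    rw [hdA2.fderiv]
    simp only [ContinuousLinearMap.add_apply, ContinuousLinearMap.smulRight_apply,
      ContinuousLinearMap.smul_apply, ContinuousLinearMap.neg_apply,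
      ContinuousLinearMap.flip_apply, smul_eq_mul, hv_def]
    ext <;> simp <;> simp [qe]
  have hq3 : ∀ ν, qpd ν (Aminus ρ 3) p = (⟨0, 2⁻¹ * v ν 2, -(2⁻¹ * v ν 1), -(2⁻¹ * v ν 0)⟩ : ℍ[ℝ]) := by
    intro ν
    show fderiv ℝ (Aminus ρ 3) p (qe ν) = _
    rw [hdA3.fderiv]
    simp only [ContinuousLinearMap.add_apply, ContinuousLinearMap.smulRight_apply,
      ContinuousLinearMap.smul_apply, ContinuousLinearMap.neg_apply,
      ContinuousLinearMap.flip_apply, smul_eq_mul, hv_def]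
    ext <;> simp <;> simp [qe]
  have hA0p : Aminus ρ 0 p = (⟨0, 2⁻¹ * a 1, 2⁻¹ * a 2, 2⁻¹ * a 3⟩ : ℍ[ℝ]) := by
    rw [(hAx p hp).1]; ext <;> simp [ha_def] <;> simp [qe]
  have hA1p : Aminus ρ 1 p = (⟨0, -(2⁻¹ * a 0), 2⁻¹ * a 3, -(2⁻¹ * a 2)⟩ : ℍ[ℝ]) := by
    rw [(hAx p hp).2.1]; ext <;> simp [ha_def] <;> simp [qe]
  have hA2p : Aminus ρ 2 p = (⟨0, -(2⁻¹ * a 3), -(2⁻¹ * a 0), 2⁻¹ * a 1⟩ : ℍ[ℝ]) := by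
    rw [(hAx p hp).2.2.1]; ext <;> simp [ha_def] <;> simp [qe]
  have hA3p : Aminus ρ 3 p = (⟨0, 2⁻¹ * a 2, -(2⁻¹ * a 1), -(2⁻¹ * a 0)⟩ : ℍ[ℝ]) := by
    rw [(hAx p hp).2.2.2]; ext <;> simp [ha_def] <;> simp [qe]
  have hc1 : (curv (Aminus ρ) 0 1 p = curv (Aminus ρ) 2 3 p) ↔
      v 0 0 + v 1 1 + v 2 2 + v 3 3 + a 0 * a 0 + a 1 * a 1 + a 2 * a 2 + a 3 * a 3 = 0 := by
    simp only [curv]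
    rw [hq1 0, hq0 1, hq3 2, hq2 3, hA0p, hA1p, hA2p, hA3p]
    constructor
    · intro hE
      have h1 := congrArg QuaternionAlgebra.imI hE
      simp only [QuaternionAlgebra.imI, Quaternion.imI_add, Quaternion.imI_sub, Quaternion.imI_mul,
        QuaternionAlgebra.imI_add, QuaternionAlgebra.imI_sub, QuaternionAlgebra.imI_mul, qL_eq, qL_re, qL_imI, qL_imJ, qL_imK] at h1
      linarith [h1]
    · intro hw
      ext <;>
        simp only [Quaternion.re_add, Quaternion.re_sub, Quaternion.re_mul,
          Quaternion.imI_add, Quaternion.imI_sub, Quaternion.imI_mul,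
          Quaternion.imJ_add, Quaternion.imJ_sub, Quaternion.imJ_mul,
          Quaternion.imK_add, Quaternion.imK_sub, Quaternion.imK_mul,
          QuaternionAlgebra.re_add, QuaternionAlgebra.re_sub, QuaternionAlgebra.re_mul,
          QuaternionAlgebra.imI_add, QuaternionAlgebra.imI_sub, QuaternionAlgebra.imI_mul,
          QuaternionAlgebra.imJ_add, QuaternionAlgebra.imJ_sub, QuaternionAlgebra.imJ_mul,
          QuaternionAlgebra.imK_add, QuaternionAlgebra.imK_sub, QuaternionAlgebra.imK_mul, qL_eq, qL_re, qL_imI, qL_imJ, qL_imK]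
      · ring
      · linear_combination (-(2:ℝ)⁻¹) * hw
      · linear_combination ((2:ℝ)⁻¹) * hsym 0 3 - ((2:ℝ)⁻¹) * hsym 1 2
      · linear_combination (-(2:ℝ)⁻¹) * hsym 0 2 - ((2:ℝ)⁻¹) * hsym 1 3
  have hc2 : (curv (Aminus ρ) 0 2 p = curv (Aminus ρ) 3 1 p) ↔
      v 0 0 + v 1 1 + v 2 2 + v 3 3 + a 0 * a 0 + a 1 * a 1 + a 2 * a 2 + a 3 * a 3 = 0 := by
    simp only [curv]
    rw [hq2 0, hq0 2, hq1 3, hq3 1, hA0p, hA1p, hA2p, hA3p]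
    constructor
    · intro hE
      have h1 := congrArg QuaternionAlgebra.imJ hE
      simp only [QuaternionAlgebra.imJ, Quaternion.imJ_add, Quaternion.imJ_sub, Quaternion.imJ_mul,
        QuaternionAlgebra.imJ_add, QuaternionAlgebra.imJ_sub, QuaternionAlgebra.imJ_mul, qL_eq, qL_re, qL_imI, qL_imJ, qL_imK] at h1
      linarith [h1]
    · intro hw
      ext <;>
        simp only [Quaternion.re_add, Quaternion.re_sub, Quaternion.re_mul,
          Quaternion.imI_add, Quaternion.imI_sub, Quaternion.imI_mul,
          Quaternion.imJ_add, Quaternion.imJ_sub, Quaternion.imJ_mul,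
          Quaternion.imK_add, Quaternion.imK_sub, Quaternion.imK_mul,
          QuaternionAlgebra.re_add, QuaternionAlgebra.re_sub, QuaternionAlgebra.re_mul,
          QuaternionAlgebra.imI_add, QuaternionAlgebra.imI_sub, QuaternionAlgebra.imI_mul,
          QuaternionAlgebra.imJ_add, QuaternionAlgebra.imJ_sub, QuaternionAlgebra.imJ_mul,
          QuaternionAlgebra.imK_add, QuaternionAlgebra.imK_sub, QuaternionAlgebra.imK_mul, qL_eq, qL_re, qL_imI, qL_imJ, qL_imK]
      · ring
      · linear_combination (-((2:ℝ)⁻¹)) * hsym 0 3 + ((2:ℝ)⁻¹) * hsym 1 2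
      · linear_combination (-(2:ℝ)⁻¹) * hw
      · linear_combination ((2:ℝ)⁻¹) * hsym 0 1 - ((2:ℝ)⁻¹) * hsym 2 3
  have hc3 : (curv (Aminus ρ) 0 3 p = curv (Aminus ρ) 1 2 p) ↔
      v 0 0 + v 1 1 + v 2 2 + v 3 3 + a 0 * a 0 + a 1 * a 1 + a 2 * a 2 + a 3 * a 3 = 0 := by
    simp only [curv]
    rw [hq3 0, hq0 3, hq2 1, hq1 2, hA0p, hA1p, hA2p, hA3p]
    constructor
    · intro hE
      have h1 := congrArg QuaternionAlgebra.imK hE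
      simp only [QuaternionAlgebra.imK, Quaternion.imK_add, Quaternion.imK_sub, Quaternion.imK_mul,
        QuaternionAlgebra.imK_add, QuaternionAlgebra.imK_sub, QuaternionAlgebra.imK_mul, qL_eq, qL_re, qL_imI, qL_imJ, qL_imK] at h1
      linarith [h1]
    · intro hw
      ext <;>
        simp only [Quaternion.re_add, Quaternion.re_sub, Quaternion.re_mul,
          Quaternion.imI_add, Quaternion.imI_sub, Quaternion.imI_mul,
          Quaternion.imJ_add, Quaternion.imJ_sub, Quaternion.imJ_mul,
          Quaternion.imK_add, Quaternion.imK_sub, Quaternion.imK_mul,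
          QuaternionAlgebra.re_add, QuaternionAlgebra.re_sub, QuaternionAlgebra.re_mul,
          QuaternionAlgebra.imI_add, QuaternionAlgebra.imI_sub, QuaternionAlgebra.imI_mul,
          QuaternionAlgebra.imJ_add, QuaternionAlgebra.imJ_sub, QuaternionAlgebra.imJ_mul,
          QuaternionAlgebra.imK_add, QuaternionAlgebra.imK_sub, QuaternionAlgebra.imK_mul, qL_eq, qL_re, qL_imI, qL_imJ, qL_imK]
      · ring
      · linear_combination ((2:ℝ)⁻¹) * hsym 0 2 + ((2:ℝ)⁻¹) * hsym 1 3
      · linear_combination (-((2:ℝ)⁻¹)) * hsym 0 1 + ((2:ℝ)⁻¹) * hsym 2 3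
      · linear_combination (-(2:ℝ)⁻¹) * hw
  have hρd : ∀ x ∈ U, DifferentiableAt ℝ ρ x := fun x hx => (hρC x hx).differentiableAt (by simp)
  have hglog : ∀ x ∈ U, HasFDerivAt g ((ρ x)⁻¹ • fderiv ℝ ρ x) x := fun x hx =>
    (Real.hasDerivAt_log (hpos x hx).ne').comp_hasFDerivAt x (hρd x hx).hasFDerivAt
  have hufor : ∀ x ∈ U, ∀ σ, rpd σ ρ x = ρ x * u σ x := by
    intro x hx σ
    have h1 : fderiv ℝ g x = (ρ x)⁻¹ • fderiv ℝ ρ x := (hglog x hx).fderiv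
    show fderiv ℝ ρ x (qe σ) = ρ x * u σ x
    simp only [hu_def, h1, ContinuousLinearMap.smul_apply, smul_eq_mul]
    rw [← mul_assoc, mul_inv_cancel₀ (hpos x hx).ne', one_mul]
  have hlap2 : ∀ σ : Fin 4, rpd σ (rpd σ ρ) p = ρ p * v σ σ + (ρ p * a σ) * a σ := by
    intro σ
    have hmul : HasFDerivAt (fun x => ρ x * u σ x)
        (ρ p • G'.flip (qe σ) + u σ p • fderiv ℝ ρ p) p :=
      (hρd p hp).hasFDerivAt.mul (hu σ)
    have hev : rpd σ ρ =ᶠ[nhds p] fun x => ρ x * u σ x :=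
      Filter.eventually_of_mem hmemU fun x hx => hufor x hx σ
    have h2 : fderiv ℝ ρ p (qe σ) = ρ p * a σ := by
      simp only [ha_def]; exact hufor p hp σ
    show fderiv ℝ (rpd σ ρ) p (qe σ) = _
    rw [(hmul.congr_of_eventuallyEq hev).fderiv]
    simp only [ContinuousLinearMap.add_apply, ContinuousLinearMap.smul_apply,
      ContinuousLinearMap.flip_apply, smul_eq_mul, h2, hv_def, ha_def]
    ring
  have hlap : qlap ρ p = ρ p * (v 0 0 + v 1 1 + v 2 2 + v 3 3
      + a 0 * a 0 + a 1 * a 1 + a 2 * a 2 + a 3 * a 3) := by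
    show (∑ μ : Fin 4, rpd μ (rpd μ ρ) p) = _
    rw [Fin.sum_univ_four, hlap2 0, hlap2 1, hlap2 2, hlap2 3]
    ring
  have hwiff : qlap ρ p = 0 ↔
      v 0 0 + v 1 1 + v 2 2 + v 3 3 + a 0 * a 0 + a 1 * a 1 + a 2 * a 2 + a 3 * a 3 = 0 := by
    rw [hlap]
    constructor
    · intro h
      rcases mul_eq_zero.mp h with h | h
      · exact absurd h (hpos p hp).ne'
      · exact h
    · intro h; rw [h, mul_zero]
  simp only [SelfDualAt]
  rw [hc1, hc2, hc3, hwiff]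
  tauto

theorem selfDual_iff_harmonic (U : Set ℍ[ℝ]) (hU : IsOpen U) (ρ : ℍ[ℝ] → ℝ)
    (hρ : ContDiffOn ℝ (⊤ : ℕ∞) ρ U) (hpos : ∀ x ∈ U, 0 < ρ x) :
    (∀ p ∈ U, SelfDualAt (Aminus ρ) p ↔ qlap ρ p = 0) ∧
    ((∀ p ∈ U, SelfDualAt (Aminus ρ) p) ↔ ∀ p ∈ U, qlap ρ p = 0) := by
  refine ⟨fun p hp => key U hU ρ hρ hpos p hp, ?_⟩
  exact forall₂_congr fun p hp => key U hU ρ hρ hpos p hp
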